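/- Let P be a full-dimensional polytope in ℝⁿ, Q ⊆ interior(P) a full-dimensional polytope, and (f_i) a sequence of concave functions P → ℝ with sup_i ∫_P |f_i| ≤ C. Then the restrictions f_i|_Q are uniformly bounded below: there exists C_ℓ ∈ ℝ with f_i(x) ≥ C_ℓ for all x ∈ Q and all i. -/

import Mathlib

open MeasureTheory Metric

/-! By Jensen's inequality a concave function dominates at `x` its average over any ball centred
at `x`; if that ball lies in `P`, the average is at least `-(∫ y in P, |f y|) / vol (ball)`.
Compactness of `Q ⊆ interior P` gives one radius that works for every `x ∈ Q`.
The Bochner integral of a non-integrable function is `0`, so this needs `f` integrable on `P`: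
it is bounded below by its minimum over the vertices, and hence also bounded above, since
concavity along the segment through an interior point `x₀` bounds `f x` by `f x₀` and the lower
bound. -/

theorem ConcaveOn.bddBelow_image_convexHull {E : Type*} [AddCommGroup E] [Module ℝ E]
    {S : Set E} {f : E → ℝ} (hS : S.Finite) (hf : ConcaveOn ℝ (convexHull ℝ S) f) :
    BddBelow (f '' convexHull ℝ S) := by
  obtain ⟨m, hm⟩ := (hS.image f).bddBelow
  refine ⟨m, ?_⟩
  rintro _ ⟨x, hx, rfl⟩
  obtain ⟨y, hyS, hyx⟩ := hf.exists_le_of_mem_convexHull (subset_convexHull ℝ S) hx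
  exact (hm ⟨y, hyS, rfl⟩).trans hyx

section

variable {E : Type*} [NormedAddCommGroup E] [NormedSpace ℝ E] {s : Set E} {f : E → ℝ}

theorem ConcaveOn.bddAbove_image_of_bddBelow (hf : ConcaveOn ℝ s f) (hs : Bornology.IsBounded s)
    {x₀ : E} (hx₀ : x₀ ∈ interior s) (hbdd : BddBelow (f '' s)) : BddAbove (f '' s) := by
  obtain ⟨m, hm⟩ := hbdd
  obtain ⟨ε, hε, hball⟩ := Metric.isOpen_iff.1 isOpen_interior x₀ hx₀
  obtain ⟨R, hsR⟩ := hs.subset_closedBall x₀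
  obtain ⟨t, ht, htR⟩ := exists_pos_mul_lt hε R
  refine ⟨((1 + t) * f x₀ - m) / t, ?_⟩
  rintro _ ⟨x, hx, rfl⟩
  set y := x₀ + t • (x₀ - x)
  have hy : y ∈ s := by
    refine interior_subset (hball ?_)
    rw [mem_ball, dist_eq_norm, add_sub_cancel_left, norm_smul, norm_sub_rev,
      Real.norm_of_nonneg ht.le]
    calc t * ‖x - x₀‖ ≤ t * R := by gcongr; exact mem_closedBall_iff_norm.1 (hsR hx)
      _ < ε := by rwa [mul_comm]
  have h1t : 1 + t ≠ 0 := by positivity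
  have hcomb : (1 + t)⁻¹ • y + (t / (1 + t)) • x = x₀ := by
    have : y + t • x = (1 + t) • x₀ := by simp only [y]; module
    rw [div_eq_inv_mul, ← smul_smul, ← smul_add, this, smul_smul, inv_mul_cancel₀ h1t, one_smul]
  have hconc : (1 + t)⁻¹ * f y + t / (1 + t) * f x ≤ f x₀ := by
    simpa only [hcomb, smul_eq_mul] using
      hf.2 hy hx (by positivity) (by positivity) (by field_simp : (1 + t)⁻¹ + t / (1 + t) = 1)
  have hmy := hm ⟨y, hy, rfl⟩
  rw [le_div_iff₀ ht]
  field_simp at hconc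
  linarith

variable [MeasurableSpace E] [BorelSpace E] [FiniteDimensional ℝ E] (μ : Measure E)
  [μ.IsAddHaarMeasure]

theorem setAverage_closedBall_id (x : E) {ρ : ℝ} (hρ : 0 < ρ) :
    ⨍ y in closedBall x ρ, y ∂μ = x := by
  set B := closedBall x ρ
  have hB : μ B ≠ 0 := (measure_closedBall_pos μ x hρ).ne'
  have hB' : μ B ≠ ⊤ := measure_closedBall_lt_top.ne
  have hreflect : (fun y ↦ x + x - y) ⁻¹' B = B := by
    ext y
    simp only [Set.mem_preimage, B, mem_closedBall, dist_eq_norm, ← norm_neg (y - x)]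
    congr! 2
    abel
  have hsymm : ∫ y in B, (x + x - y) ∂μ = ∫ y in B, y ∂μ := by
    simpa [hreflect] using (Measure.measurePreserving_sub_left μ (x + x)).setIntegral_preimage_emb
      (MeasurableEquiv.subLeft (x + x)).measurableEmbedding id B
  have hconst : IntegrableOn (fun _ ↦ x + x) B μ := integrableOn_const hB'
  have hid : IntegrableOn (fun y ↦ y) B μ :=
    continuous_id.continuousOn.integrableOn_compact (isCompact_closedBall x ρ)
  rw [integral_sub hconst hid, setIntegral_const] at hsymm
  have : ∫ y in B, y ∂μ = μ.real B • x := by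
    linear_combination (norm := module) (-1 / 2 : ℝ) • hsymm
  rw [setAverage_eq, this, smul_smul, inv_mul_cancel₀ (measureReal_ne_zero_iff hB' |>.2 hB),
    one_smul]

theorem ConcaveOn.aestronglyMeasurable_restrict (hf : ConcaveOn ℝ s f) :
    AEStronglyMeasurable f (μ.restrict s) := by
  rw [← Measure.restrict_congr_set (interior_ae_eq_of_null_frontier (hf.1.addHaar_frontier μ))]
  exact hf.continuousOn_interior.aestronglyMeasurable isOpen_interior.measurableSet

theorem ConcaveOn.integrableOn_of_bddBelow (hf : ConcaveOn ℝ s f) (hs : IsCompact s) {x₀ : E}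
    (hx₀ : x₀ ∈ interior s) (hbdd : BddBelow (f '' s)) : IntegrableOn f s μ := by
  obtain ⟨M, hM⟩ := (isBounded_iff_bddBelow_bddAbove.2
    ⟨hbdd, hf.bddAbove_image_of_bddBelow hs.isBounded hx₀ hbdd⟩).exists_norm_le
  exact .of_bound hs.measure_lt_top (hf.aestronglyMeasurable_restrict μ) M
    (ae_restrict_of_forall_mem hs.measurableSet fun x hx ↦ hM _ ⟨x, hx, rfl⟩)

theorem ConcaveOn.setAverage_closedBall_le (hf : ConcaveOn ℝ s f) {x : E} {ρ : ℝ} (hρ : 0 < ρ)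
    (hB : closedBall x ρ ⊆ interior s) : ⨍ y in closedBall x ρ, f y ∂μ ≤ f x := by
  have hcont : ContinuousOn f (closedBall x ρ) := hf.continuousOn_interior.mono hB
  have jensen := (hf.subset (hB.trans interior_subset) (convex_closedBall x ρ)).le_map_set_average
    hcont isClosed_closedBall (measure_closedBall_pos μ x hρ).ne' measure_closedBall_lt_top.ne
    (ae_restrict_mem measurableSet_closedBall)
    (continuous_id.continuousOn.integrableOn_compact (isCompact_closedBall x ρ))
    (hcont.integrableOn_compact (isCompact_closedBall x ρ))
  rwa [setAverage_closedBall_id μ x hρ] at jensen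

theorem ConcaveOn.neg_setIntegral_abs_div_le (hf : ConcaveOn ℝ s f) (hfi : IntegrableOn f s μ)
    {x : E} {ρ : ℝ} (hρ : 0 < ρ) (hB : closedBall x ρ ⊆ interior s) :
    -(∫ y in s, |f y| ∂μ) / μ.real (closedBall x ρ) ≤ f x := by
  set B := closedBall x ρ
  calc -(∫ y in s, |f y| ∂μ) / μ.real B ≤ -(∫ y in B, |f y| ∂μ) / μ.real B := by
        gcongr -?_ / _
        exact setIntegral_mono_set hfi.abs (ae_of_all _ fun _ ↦ abs_nonneg _)
          (hB.trans interior_subset).eventuallyLE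
    _ ≤ (∫ y in B, f y ∂μ) / μ.real B := by
        gcongr
        exact neg_le_of_abs_le abs_integral_le_integral_abs
    _ = ⨍ y in B, f y ∂μ := by rw [setAverage_eq, smul_eq_mul, div_eq_inv_mul]
    _ ≤ f x := hf.setAverage_closedBall_le μ hρ hB

end

theorem stmt5_general (n : ℕ) (P Q : Set (EuclideanSpace ℝ (Fin n)))
    (hPpoly : ∃ S : Finset (EuclideanSpace ℝ (Fin n)), P = convexHull ℝ (S : Set _))
    (hQpoly : ∃ S : Finset (EuclideanSpace ℝ (Fin n)), Q = convexHull ℝ (S : Set _))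
    (hQP : Q ⊆ interior P)
    (f : ℕ → EuclideanSpace ℝ (Fin n) → ℝ) (C : ℝ)
    (hconc : ∀ i, ConcaveOn ℝ P (f i))
    (hL1 : ∀ i, (∫ x in P, |f i x|) ≤ C) :
    ∃ Cl : ℝ, ∀ i, ∀ x ∈ Q, Cl ≤ f i x := by
  obtain ⟨SP, rfl⟩ := hPpoly
  obtain ⟨SQ, rfl⟩ := hQpoly
  obtain ⟨ρ, hρ, hthick⟩ := (SQ.finite_toSet.isCompact_convexHull (𝕜 := ℝ))
    |>.exists_cthickening_subset_open isOpen_interior hQP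
  refine ⟨-C / volume.real (closedBall (0 : EuclideanSpace ℝ (Fin n)) ρ), fun i x hx ↦ ?_⟩
  have hfi := (hconc i).integrableOn_of_bddBelow volume
    (SP.finite_toSet.isCompact_convexHull (𝕜 := ℝ)) (hQP hx)
    ((hconc i).bddBelow_image_convexHull SP.finite_toSet)
  have hball := (hconc i).neg_setIntegral_abs_div_le volume hfi hρ
    ((closedBall_subset_cthickening hx ρ).trans hthick)
  rw [Measure.addHaar_real_closedBall_center] at hball
  refine le_trans ?_ hball
  gcongr
  exact hL1 i

theorem stmt5 (n : ℕ) (P Q : Set (EuclideanSpace ℝ (Fin n)))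
    (hPpoly : ∃ S : Finset (EuclideanSpace ℝ (Fin n)), P = convexHull ℝ (S : Set _))
    (hQpoly : ∃ S : Finset (EuclideanSpace ℝ (Fin n)), Q = convexHull ℝ (S : Set _))
    (hPfull : (interior P).Nonempty) (hQfull : (interior Q).Nonempty)
    (hQP : Q ⊆ interior P)
    (f : ℕ → EuclideanSpace ℝ (Fin n) → ℝ) (C : ℝ)
    (hconc : ∀ i, ConcaveOn ℝ P (f i))
    (hL1 : ∀ i, (∫ x in P, |f i x|) ≤ C) :
    ∃ Cl : ℝ, ∀ i, ∀ x ∈ Q, Cl ≤ f i x :=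
  stmt5_general n P Q hPpoly hQpoly hQP f C hconc hL1
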